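/- arXiv:2108.01584 — 4 statements merged into one kernel-verified Lean document; each statement's English description precedes it below -/
import Mathlib

section
/- (Johnson–Lindenstrauss Theorem.) Let X be a set of n points (n ≥ 2) in the Euclidean space ℝ^d and let ε ∈ (0,1). If k is a natural number with k ≥ 4·(ε²/2 − ε³/3)⁻¹·ln n, then there exists a map F : ℝ^d → ℝ^k such that for all u, v ∈ X: (1−ε)‖u−v‖² ≤ ‖F(u)−F(v)‖² ≤ (1+ε)‖u−v‖². -/
open MeasureTheory ProbabilityTheory Real Set
open scoped RealInnerProductSpace

/-!
Let `A` have independent standard Gaussian rows `A i ∈ E`. For fixed `w ≠ 0` the numbers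
`⟪w, A i⟫ / ‖w‖` are independent standard normals, so `∑ i, ⟪w, A i⟫ ^ 2 / ‖w‖ ^ 2` is χ²
with `k` degrees of freedom, with moment generating function `(1 - 2s)^(-k/2)`. Chernoff's bound
at `s = ε / (2(1 + ε))`, resp. `s = -ε/2`, together with
`ε - ε²/2 ≤ log (1 + ε) ≤ ε - ε²/2 + ε³/3`, bounds each of the two tails
`∑ ≥ (1 + ε) k`, `∑ ≤ (1 - ε) k` by `exp (-(ε²/2 - ε³/3) k / 2) ≤ 1 / n²`. A union bound over the
`n (n - 1) / 2` pairs of points leaves positive probability that `w ↦ k^(-1/2) (⟪w, A i⟫)ᵢ`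
distorts no squared distance by more than a factor `1 ± ε`.
-/

lemma monotoneOn_Ici_of_hasDerivAt_nonneg {a : ℝ} {f f' : ℝ → ℝ}
    (hf : ∀ t, a ≤ t → HasDerivAt f (f' t) t) (hf' : ∀ t, a < t → 0 ≤ f' t) :
    MonotoneOn f (Ici a) :=
  monotoneOn_of_hasDerivWithinAt_nonneg (convex_Ici a)
    (fun t ht => (hf t ht).continuousAt.continuousWithinAt)
    (fun t ht => (hf t (interior_subset ht)).hasDerivWithinAt)
    (fun t ht => hf' t (by rwa [interior_Ici] at ht))

lemma hasDerivAt_log_one_add {t : ℝ} (ht : -1 < t) :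
    HasDerivAt (fun t => log (1 + t)) (1 / (1 + t)) t :=
  ((hasDerivAt_id t).const_add 1).log (by simp only [id]; linarith)

lemma log_one_add_le {x : ℝ} (hx : 0 ≤ x) : log (1 + x) ≤ x - x ^ 2 / 2 + x ^ 3 / 3 := by
  have hmono := monotoneOn_Ici_of_hasDerivAt_nonneg (a := 0)
    (f := fun t => t - t ^ 2 / 2 + t ^ 3 / 3 - log (1 + t)) (f' := fun t => t ^ 3 / (1 + t))
    (fun t ht => by
      refine ((((hasDerivAt_id' t).fun_sub ((hasDerivAt_pow 2 t).div_const 2)).fun_add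
        ((hasDerivAt_pow 3 t).div_const 3)).fun_sub
          (hasDerivAt_log_one_add (by linarith))).congr_deriv ?_
      have : 1 + t ≠ 0 := by positivity
      field_simp
      ring)
    (fun t ht => by positivity)
  simpa using hmono self_mem_Ici hx hx

lemma sub_sq_div_two_le_log_one_add {x : ℝ} (hx : 0 ≤ x) : x - x ^ 2 / 2 ≤ log (1 + x) := by
  have hmono := monotoneOn_Ici_of_hasDerivAt_nonneg (a := 0)
    (f := fun t => log (1 + t) - t + t ^ 2 / 2) (f' := fun t => t ^ 2 / (1 + t))
    (fun t ht => by
      refine (((hasDerivAt_log_one_add (by linarith)).fun_sub (hasDerivAt_id' t)).fun_add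
        ((hasDerivAt_pow 2 t).div_const 2)).congr_deriv ?_
      have : 1 + t ≠ 0 := by positivity
      field_simp
      ring)
    (fun t ht => by positivity)
  have := hmono self_mem_Ici hx hx
  simp only [add_zero, log_one] at this
  linarith

lemma gaussianPDFReal_mul_exp_mul_sq (s x : ℝ) :
    gaussianPDFReal 0 1 x * exp (s * x ^ 2) = (√(2 * π))⁻¹ * exp (-(1 / 2 - s) * x ^ 2) := by
  rw [gaussianPDFReal, mul_assoc, ← exp_add]
  congr 3 <;> push_cast <;> ring

lemma integrable_exp_mul_sq_gaussianReal {s : ℝ} (hs : s < 1 / 2) :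
    Integrable (fun x => exp (s * x ^ 2)) (gaussianReal 0 1) := by
  rw [gaussianReal_of_var_ne_zero _ one_ne_zero, integrable_withDensity_iff_integrable_smul'
    (measurable_gaussianPDF _ _) (ae_of_all _ fun _ => gaussianPDF_lt_top)]
  simp_rw [toReal_gaussianPDF, smul_eq_mul, gaussianPDFReal_mul_exp_mul_sq]
  exact (integrable_exp_neg_mul_sq (by linarith)).const_mul _

lemma mgf_sq_gaussianReal {s : ℝ} (hs : s < 1 / 2) :
    mgf (fun x => x ^ 2) (gaussianReal 0 1) s = (√(1 - 2 * s))⁻¹ := by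
  rw [mgf, integral_gaussianReal_eq_integral_smul one_ne_zero]
  simp_rw [smul_eq_mul, gaussianPDFReal_mul_exp_mul_sq, integral_const_mul, integral_gaussian]
  rw [← sqrt_inv, ← sqrt_mul (by positivity), ← sqrt_inv]
  have : 1 / 2 - s ≠ 0 := by linarith
  congr 1
  field_simp

lemma inv_sqrt_pow_eq_exp {x : ℝ} (hx : 0 < x) (k : ℕ) :
    (√x)⁻¹ ^ k = exp (-(k * log x / 2)) := by
  rw [← exp_log (sqrt_pos.2 hx), log_sqrt hx.le, ← exp_neg, ← exp_nat_mul]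
  ring_nf

section ChiSquared

variable {ι : Type*} [Fintype ι]

lemma integrable_exp_mul_sum_sq_pi_gaussianReal {s : ℝ} (hs : s < 1 / 2) :
    Integrable (fun y : ι → ℝ => exp (s * ∑ i, y i ^ 2))
      (Measure.pi fun _ => gaussianReal 0 1) := by
  simp_rw [Finset.mul_sum, exp_sum]
  exact Integrable.fintype_prod fun _ => integrable_exp_mul_sq_gaussianReal hs

lemma mgf_sum_sq_pi_gaussianReal {s : ℝ} (hs : s < 1 / 2) :
    mgf (fun y : ι → ℝ => ∑ i, y i ^ 2) (Measure.pi fun _ => gaussianReal 0 1) s =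
      (√(1 - 2 * s))⁻¹ ^ Fintype.card ι := by
  simp_rw [mgf, Finset.mul_sum, exp_sum]
  rw [integral_fintype_prod_eq_pow (fun x => exp (s * x ^ 2)), ← mgf, mgf_sq_gaussianReal hs]

lemma measureReal_sum_sq_ge_le {ε : ℝ} (hε : 0 ≤ ε) :
    (Measure.pi fun _ : ι => gaussianReal 0 1).real
        {y | (1 + ε) * Fintype.card ι ≤ ∑ i, y i ^ 2} ≤
      exp (-(ε ^ 2 / 2 - ε ^ 3 / 3) * Fintype.card ι / 2) := by
  have hs : ε / (2 * (1 + ε)) < 1 / 2 := by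
    rw [div_lt_iff₀ (by positivity)]
    linarith
  have h1s : 1 - 2 * (ε / (2 * (1 + ε))) = (1 + ε)⁻¹ := by
    field_simp
    ring
  refine (measure_ge_le_exp_mul_mgf _ (by positivity)
    (integrable_exp_mul_sum_sq_pi_gaussianReal hs)).trans ?_
  rw [mgf_sum_sq_pi_gaussianReal hs, inv_sqrt_pow_eq_exp (by rw [h1s]; positivity), ← exp_add,
    exp_le_exp, h1s, log_inv]
  have hk : (0 : ℝ) ≤ Fintype.card ι := by positivity
  have : ε / (2 * (1 + ε)) * ((1 + ε) * Fintype.card ι) = ε * Fintype.card ι / 2 := by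
    field_simp
  nlinarith [mul_le_mul_of_nonneg_right (log_one_add_le hε) hk]

lemma measureReal_sum_sq_le_le {ε : ℝ} (hε : 0 ≤ ε) :
    (Measure.pi fun _ : ι => gaussianReal 0 1).real
        {y | ∑ i, y i ^ 2 ≤ (1 - ε) * Fintype.card ι} ≤
      exp (-(ε ^ 2 / 2 - ε ^ 3 / 3) * Fintype.card ι / 2) := by
  have hs : -(ε / 2) < 1 / 2 := by linarith
  refine (measure_le_le_exp_mul_mgf _ (by linarith)
    (integrable_exp_mul_sum_sq_pi_gaussianReal hs)).trans ?_
  rw [mgf_sum_sq_pi_gaussianReal hs, inv_sqrt_pow_eq_exp (by linarith), ← exp_add, exp_le_exp,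
    show 1 - 2 * -(ε / 2) = 1 + ε by ring]
  have hk : (0 : ℝ) ≤ Fintype.card ι := by positivity
  nlinarith [mul_le_mul_of_nonneg_right (sub_sq_div_two_le_log_one_add hε) hk,
    mul_nonneg (pow_nonneg hε 3) hk]

end ChiSquared

section GaussianProjection

variable {E : Type*} [NormedAddCommGroup E] [InnerProductSpace ℝ E] {ι : Type*} [Fintype ι]

noncomputable def scaledInnerMap (A : ι → E) (w : E) : EuclideanSpace ℝ ι :=
  (√(Fintype.card ι))⁻¹ • WithLp.toLp 2 fun i => ⟪w, A i⟫

lemma norm_scaledInnerMap_sub_sq (A : ι → E) (u v : E) :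
    ‖scaledInnerMap A u - scaledInnerMap A v‖ ^ 2 =
      (∑ i, ⟪u - v, A i⟫ ^ 2) / Fintype.card ι := by
  rw [scaledInnerMap, scaledInnerMap, ← smul_sub, norm_smul, mul_pow, ← WithLp.toLp_sub,
    EuclideanSpace.real_norm_sq_eq]
  simp [inner_sub_left, div_eq_inv_mul]

variable [FiniteDimensional ℝ E] [MeasurableSpace E] [BorelSpace E]

lemma map_inner_stdGaussian (x : E) :
    (stdGaussian E).map (fun y => ⟪x, y⟫) = gaussianReal 0 (‖x‖₊ ^ 2) := by
  have h := IsGaussian.map_eq_gaussianReal (μ := stdGaussian E) (innerSL ℝ x)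
  rw [integral_strongDual_stdGaussian, variance_dual_stdGaussian, innerSL_apply_norm] at h
  rw [show (fun y => ⟪x, y⟫) = innerSL ℝ x from rfl, h, Real.toNNReal_pow (norm_nonneg x),
    norm_toNNReal]

lemma measurePreserving_inner_pi_stdGaussian {x : E} (hx : ‖x‖ = 1) :
    MeasurePreserving (fun (A : ι → E) i => ⟪x, A i⟫)
      (Measure.pi fun _ => stdGaussian E) (Measure.pi fun _ => gaussianReal 0 1) := by
  refine measurePreserving_pi _ _ fun _ => ⟨by fun_prop, ?_⟩
  rw [map_inner_stdGaussian, show ‖x‖₊ = 1 from Subtype.ext hx, one_pow]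

lemma measureReal_sum_inner_sq_notMem_Ioo_le {w : E} (hw : w ≠ 0) {ε : ℝ} (hε : 0 ≤ ε) :
    (Measure.pi fun _ : ι => stdGaussian E).real
        {A | ∑ i, ⟪w, A i⟫ ^ 2 ∉
          Ioo ((1 - ε) * Fintype.card ι * ‖w‖ ^ 2) ((1 + ε) * Fintype.card ι * ‖w‖ ^ 2)} ≤
      2 * exp (-(ε ^ 2 / 2 - ε ^ 3 / 3) * Fintype.card ι / 2) := by
  have hw' : 0 < ‖w‖ ^ 2 := by positivity
  have hx : ‖‖w‖⁻¹ • w‖ = 1 := norm_smul_inv_norm hw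
  have hsum (A : ι → E) : ∑ i, ⟪w, A i⟫ ^ 2 = ‖w‖ ^ 2 * ∑ i, ⟪‖w‖⁻¹ • w, A i⟫ ^ 2 := by
    simp_rw [real_inner_smul_left, mul_pow, ← Finset.mul_sum, ← mul_assoc, inv_pow,
      mul_inv_cancel₀ hw'.ne', one_mul]
  have hset : {A : ι → E | ∑ i, ⟪w, A i⟫ ^ 2 ∉
      Ioo ((1 - ε) * Fintype.card ι * ‖w‖ ^ 2) ((1 + ε) * Fintype.card ι * ‖w‖ ^ 2)} =
      (fun A i => ⟪‖w‖⁻¹ • w, A i⟫) ⁻¹'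
        ({y | (1 + ε) * Fintype.card ι ≤ ∑ i, y i ^ 2} ∪
          {y | ∑ i, y i ^ 2 ≤ (1 - ε) * Fintype.card ι}) := by
    ext A
    simp only [mem_ofPred_eq, mem_preimage, mem_union, mem_Ioo, not_and_or, not_lt, hsum,
      mul_comm _ (‖w‖ ^ 2), mul_le_mul_iff_right₀ hw']
    tauto
  have hmp := measurePreserving_inner_pi_stdGaussian (ι := ι) hx
  rw [hset, ← map_measureReal_apply hmp.measurable ((measurableSet_le measurable_const
    (by fun_prop)).union (measurableSet_le (by fun_prop) measurable_const)), hmp.map_eq, two_mul]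
  exact (measureReal_union_le _ _).trans
    (add_le_add (measureReal_sum_sq_ge_le hε) (measureReal_sum_sq_le_le hε))

lemma exists_forall_sum_inner_sq_mem_Ioo {X : Finset E} {ε : ℝ} (hε : 0 ≤ ε)
    (hX : (X.card.choose 2 : ℝ) *
      (2 * exp (-(ε ^ 2 / 2 - ε ^ 3 / 3) * Fintype.card ι / 2)) < 1) :
    ∃ A : ι → E, ∀ u ∈ X, ∀ v ∈ X, u ≠ v → ∑ i, ⟪u - v, A i⟫ ^ 2 ∈
      Ioo ((1 - ε) * Fintype.card ι * ‖u - v‖ ^ 2) ((1 + ε) * Fintype.card ι * ‖u - v‖ ^ 2) := by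
  classical
  let bad (w : E) : Set (ι → E) := {A | ∑ i, ⟪w, A i⟫ ^ 2 ∉
    Ioo ((1 - ε) * Fintype.card ι * ‖w‖ ^ 2) ((1 + ε) * Fintype.card ι * ‖w‖ ^ 2)}
  have bad_neg (w : E) : bad (-w) = bad w := by
    simp only [bad, inner_neg_left, neg_sq, norm_neg]
  -- `bad` is even, so it lives on the `#X.choose 2` unordered pairs of distinct points.
  let badPair : Sym2 E → Set (ι → E) :=
    Sym2.lift ⟨fun u v => bad (u - v), fun u v => by simp only [← bad_neg (u - v), neg_sub]⟩
  let pairs := X.offDiag.image Sym2.mk.uncurry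
  have hprob : (Measure.pi fun _ : ι => stdGaussian E).real (⋃ z ∈ pairs, badPair z) < 1 :=
    calc _ ≤ ∑ z ∈ pairs, (Measure.pi fun _ : ι => stdGaussian E).real (badPair z) :=
          measureReal_biUnion_finset_le _ _
      _ ≤ ∑ _z ∈ pairs, 2 * exp (-(ε ^ 2 / 2 - ε ^ 3 / 3) * Fintype.card ι / 2) := by
          refine Finset.sum_le_sum fun z hz => ?_
          obtain ⟨⟨u, v⟩, huv, rfl⟩ := Finset.mem_image.1 hz
          exact measureReal_sum_inner_sq_notMem_Ioo_le
            (sub_ne_zero.2 (Finset.mem_offDiag.1 huv).2.2) hε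
      _ < 1 := by rwa [Finset.sum_const, nsmul_eq_mul, Sym2.card_image_offDiag]
  obtain ⟨A, hA⟩ : ∃ A, A ∉ ⋃ z ∈ pairs, badPair z := by
    by_contra! h
    simp [eq_univ_of_forall h] at hprob
  refine ⟨A, fun u hu v hv huv => not_not.1 fun hbad => hA ?_⟩
  exact mem_biUnion (x := s(u, v))
    (Finset.mem_image_of_mem _ (Finset.mem_offDiag.2 ⟨hu, hv, huv⟩)) hbad

lemma exists_near_isometric_map {X : Finset E} {ε : ℝ} (hε : 0 ≤ ε)
    (hX : (X.card.choose 2 : ℝ) *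
      (2 * exp (-(ε ^ 2 / 2 - ε ^ 3 / 3) * Fintype.card ι / 2)) < 1) :
    ∃ F : E → EuclideanSpace ℝ ι, ∀ u ∈ X, ∀ v ∈ X,
      (1 - ε) * ‖u - v‖ ^ 2 ≤ ‖F u - F v‖ ^ 2 ∧ ‖F u - F v‖ ^ 2 ≤ (1 + ε) * ‖u - v‖ ^ 2 := by
  obtain ⟨A, hA⟩ := exists_forall_sum_inner_sq_mem_Ioo hε hX
  refine ⟨scaledInnerMap A, fun u hu v hv => ?_⟩
  rcases eq_or_ne u v with rfl | huv
  · simp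
  obtain ⟨hlo, hhi⟩ := hA u hu v hv huv
  have hk : (0 : ℝ) < Fintype.card ι := by
    refine (Nat.cast_nonneg _).lt_of_ne fun hk => ?_
    simp only [← hk, mul_zero, zero_mul] at hlo hhi
    linarith
  rw [norm_scaledInnerMap_sub_sq, le_div_iff₀ hk, div_le_iff₀ hk]
  constructor <;> linarith

end GaussianProjection

lemma cast_choose_two_mul_two_mul_exp_lt_one {n k : ℕ} {q : ℝ} (hq : 0 < q)
    (hk : 4 * q⁻¹ * log n ≤ k) : (n.choose 2 : ℝ) * (2 * exp (-q * k / 2)) < 1 := by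
  rcases Nat.eq_zero_or_pos n with rfl | hn
  · simp
  have hn' : (1 : ℝ) ≤ n := by exact_mod_cast hn
  have hexp : exp (-q * k / 2) ≤ ((n : ℝ) ^ 2)⁻¹ := by
    rw [← exp_log (by positivity : (0 : ℝ) < n ^ 2), ← exp_neg, exp_le_exp, log_pow]
    rw [mul_comm 4, mul_assoc, inv_mul_le_iff₀ hq] at hk
    push_cast
    linarith
  calc (n.choose 2 : ℝ) * (2 * exp (-q * k / 2)) = n * (n - 1) * exp (-q * k / 2) := by
        rw [Nat.cast_choose_two]
        ring
    _ ≤ n * (n - 1) * ((n : ℝ) ^ 2)⁻¹ := by gcongr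
    _ < 1 := by
        rw [← div_eq_mul_inv, div_lt_one (by positivity)]
        nlinarith

theorem johnson_lindenstrauss_general
    (d n k : ℕ) (ε : ℝ) (hε0 : 0 < ε) (hε1 : ε < 1)
    (X : Finset (EuclideanSpace ℝ (Fin d))) (hX : X.card = n)
    (hk : (4 * (ε ^ 2 / 2 - ε ^ 3 / 3)⁻¹ * Real.log n) ≤ (k : ℝ)) :
    ∃ F : EuclideanSpace ℝ (Fin d) → EuclideanSpace ℝ (Fin k),
      ∀ u ∈ X, ∀ v ∈ X,
        (1 - ε) * ‖u - v‖ ^ 2 ≤ ‖F u - F v‖ ^ 2 ∧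
        ‖F u - F v‖ ^ 2 ≤ (1 + ε) * ‖u - v‖ ^ 2 := by
  have hq : 0 < ε ^ 2 / 2 - ε ^ 3 / 3 := by nlinarith [pow_pos hε0 2]
  apply exists_near_isometric_map hε0.le
  rw [Fintype.card_fin, hX]
  exact cast_choose_two_mul_two_mul_exp_lt_one hq hk

/-- **Johnson–Lindenstrauss Theorem.** Let `X` be a set of `n` points (`n ≥ 2`) in the
Euclidean space `ℝ^d` and let `ε ∈ (0,1)`. If `k` is a natural number with
`k ≥ 4 (ε²/2 − ε³/3)⁻¹ ln n`, then there exists a map `F : ℝ^d → ℝ^k` such that for all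
`u, v ∈ X`: `(1−ε)‖u−v‖² ≤ ‖F u − F v‖² ≤ (1+ε)‖u−v‖²`. -/
theorem johnson_lindenstrauss
    (d n k : ℕ) (hn : 2 ≤ n) (ε : ℝ) (hε0 : 0 < ε) (hε1 : ε < 1)
    (X : Finset (EuclideanSpace ℝ (Fin d))) (hX : X.card = n)
    (hk : (4 * (ε ^ 2 / 2 - ε ^ 3 / 3)⁻¹ * Real.log n) ≤ (k : ℝ)) :
    ∃ F : EuclideanSpace ℝ (Fin d) → EuclideanSpace ℝ (Fin k),
      ∀ u ∈ X, ∀ v ∈ X,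
        (1 - ε) * ‖u - v‖ ^ 2 ≤ ‖F u - F v‖ ^ 2 ∧
        ‖F u - F v‖ ^ 2 ≤ (1 + ε) * ‖u - v‖ ^ 2 :=
  johnson_lindenstrauss_general d n k ε hε0 hε1 X hX hk
end

section
/- (Distribution of the squared norm of a Gaussian projection.) Let k, d be positive natural numbers and let u ∈ ℝ^d be a fixed vector. Let the law of the random k×d real matrix R be the product over (i,j) ∈ Fin k × Fin d of standard Gaussian measures (mean 0, variance 1) on ℝ. Then the pushforward of this law under the map R ↦ ‖R·u‖² equals the pushforward of the product of k standard Gaussian measures on ℝ^(Fin k) under the map z ↦ ‖u‖²·Σ_{i=1}^{k} z_i². In particular, ‖R·u‖² is distributed as ‖u‖² times a chi-squared random variable with k degrees of freedom. -/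
/-!
The rows `r_i` of `R` are independent standard Gaussian vectors of `ℝ^d`, and the law of
`⟪r_i, u⟫` under the standard Gaussian is `N(0, ‖u‖²)` (its variance is the squared norm of the
functional `⟪·, u⟫`). So `R u` has independent `N(0, ‖u‖²)` coordinates, i.e. the law of `‖u‖ z`
with `z` standard Gaussian in `ℝ^k`, and `‖‖u‖ z‖² = ‖u‖² ∑ zᵢ²`.
-/

open MeasureTheory ProbabilityTheory Matrix
open scoped NNReal

section

variable {E : Type*} [NormedAddCommGroup E] [InnerProductSpace ℝ E] [FiniteDimensional ℝ E]
  [MeasurableSpace E] [BorelSpace E]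

lemma stdGaussian_map_innerSL (u : E) :
    (stdGaussian E).map (innerSL ℝ u) = gaussianReal 0 (‖u‖₊ ^ 2) := by
  rw [IsGaussian.map_eq_gaussianReal, integral_strongDual_stdGaussian, variance_dual_stdGaussian,
    innerSL_apply_norm]
  congr
  ext
  simp

end

lemma gaussianReal_zero_one_map_const_mul (c : ℝ≥0) :
    (gaussianReal 0 1).map ((c : ℝ) * ·) = gaussianReal 0 (c ^ 2) := by
  rw [gaussianReal_map_const_mul]
  congr 1
  · simp
  · ext; simp

section

variable {ι κ : Type*} [Fintype ι] [Fintype κ]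

lemma pi_gaussianReal_map_dotProduct (u : EuclideanSpace ℝ κ) :
    (Measure.pi fun _ : κ => gaussianReal 0 1).map (· ⬝ᵥ WithLp.ofLp u)
      = gaussianReal 0 (‖u‖₊ ^ 2) := by
  have hdot : (· ⬝ᵥ WithLp.ofLp u) = innerSL ℝ u ∘ WithLp.toLp 2 := by
    ext x
    simp [EuclideanSpace.inner_eq_star_dotProduct, dotProduct_comm]
  rw [hdot, ← Measure.map_map (by fun_prop) (by fun_prop), map_pi_eq_stdGaussian,
    stdGaussian_map_innerSL]

lemma pi_gaussianReal_map_curry :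
    (Measure.pi fun _ : ι × κ => gaussianReal 0 1).map Function.curry
      = Measure.pi fun _ : ι => Measure.pi fun _ : κ => gaussianReal 0 1 := by
  simpa [Measure.infinitePi_eq_pi, MeasurableEquiv.coe_curry] using
    Measure.infinitePi_map_curry fun (_ : ι) (_ : κ) => gaussianReal 0 1

lemma pi_gaussianReal_map_mulVec (u : EuclideanSpace ℝ κ) :
    (Measure.pi fun _ : ι × κ => gaussianReal 0 1).map
        (fun R => Matrix.of (fun i j => R (i, j)) *ᵥ WithLp.ofLp u)
      = (Measure.pi fun _ : ι => gaussianReal 0 1).map (fun z i => ‖u‖ * z i) := by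
  have hrows : MeasurePreserving (fun (M : ι → κ → ℝ) i => M i ⬝ᵥ WithLp.ofLp u)
      (Measure.pi fun _ => Measure.pi fun _ => gaussianReal 0 1)
      (Measure.pi fun _ => gaussianReal 0 (‖u‖₊ ^ 2)) :=
    measurePreserving_pi _ _ fun _ => ⟨by fun_prop, pi_gaussianReal_map_dotProduct u⟩
  have hscale : MeasurePreserving (fun (z : ι → ℝ) i => ‖u‖₊ * z i)
      (Measure.pi fun _ => gaussianReal 0 1) (Measure.pi fun _ => gaussianReal 0 (‖u‖₊ ^ 2)) :=
    measurePreserving_pi _ _ fun _ => ⟨by fun_prop, gaussianReal_zero_one_map_const_mul ‖u‖₊⟩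
  simp only [coe_nnnorm] at hscale
  rw [hscale.map_eq, ← hrows.map_eq, ← pi_gaussianReal_map_curry,
    Measure.map_map (by fun_prop) (by fun_prop)]
  rfl

end

theorem gaussian_projection_sq_norm_law_general
    (k d : ℕ) (u : EuclideanSpace ℝ (Fin d)) :
    Measure.map
        (fun R : Fin k × Fin d → ℝ =>
          ‖(WithLp.equiv 2 (Fin k → ℝ)).symm
              ((Matrix.of fun i j => R (i, j)).mulVec (WithLp.equiv 2 (Fin d → ℝ) u))‖ ^ 2)
        (Measure.pi fun _ : Fin k × Fin d => gaussianReal 0 1)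
      =
    Measure.map
        (fun z : Fin k → ℝ => ‖u‖ ^ 2 * ∑ i, z i ^ 2)
        (Measure.pi fun _ : Fin k => gaussianReal 0 1) := by
  have hsq : (fun z : Fin k → ℝ => ‖u‖ ^ 2 * ∑ i, z i ^ 2)
      = (fun y => ‖WithLp.toLp 2 y‖ ^ 2) ∘ fun z i => ‖u‖ * z i := by
    ext z
    simp [EuclideanSpace.real_norm_sq_eq, mul_pow, Finset.mul_sum]
  rw [hsq, ← Measure.map_map (by fun_prop) (by fun_prop), ← pi_gaussianReal_map_mulVec,
    Measure.map_map (by fun_prop) (by fun_prop : Continuous _).measurable]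
  rfl

/-- **Distribution of the squared norm of a Gaussian projection.** For a fixed `u ∈ ℝ^d` and a
random `k × d` matrix `R` with i.i.d. standard normal entries, the law of `‖R u‖²` equals the
law of `‖u‖² · Σ_{i<k} z_i²` where `z` has the `k`-fold product standard Gaussian law; i.e.
`‖R u‖²` is distributed as `‖u‖²` times a chi-squared random variable with `k` degrees of
freedom. -/
theorem gaussian_projection_sq_norm_law
    (k d : ℕ) (hk : 0 < k) (hd : 0 < d) (u : EuclideanSpace ℝ (Fin d)) :
    Measure.map
        (fun R : Fin k × Fin d → ℝ =>
          ‖(WithLp.equiv 2 (Fin k → ℝ)).symm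
              ((Matrix.of fun i j => R (i, j)).mulVec (WithLp.equiv 2 (Fin d → ℝ) u))‖ ^ 2)
        (Measure.pi fun _ : Fin k × Fin d => gaussianReal 0 1)
      =
    Measure.map
        (fun z : Fin k → ℝ => ‖u‖ ^ 2 * ∑ i, z i ^ 2)
        (Measure.pi fun _ : Fin k => gaussianReal 0 1) :=
  gaussian_projection_sq_norm_law_general k d u
end

section
/- (Universal approximation of the random-projection Gaussian RBF network.) Let x₀ < x_end be real numbers, let [a₁, a₂] ⊂ ℝ be a nondegenerate interval, and let [g₁, g₂] ⊂ (0,∞) be a nondegenerate interval. Let ((α_j, γ_j))_{j∈ℕ} be an i.i.d. sequence of random pairs where α_j is uniformly distributed on [a₁, a₂], γ_j is uniformly distributed on [g₁, g₂], and α_j is independent of γ_j; set β_j = 1/γ_j and define the random Gaussian basis functions G_j(x) = exp(−(x + α_j)²/β_j). Then almost surely (with respect to the infinite product measure on the sequence space) the following holds: for every continuous function φ : [x₀, x_end] → ℝ, lim_{h→∞} inf_{w ∈ ℝ^h} ∫_{x₀}^{x_end} ( Σ_{j=1}^{h} w_j·G_j(x) − φ(x) )² dx = 0; that is, the distance in L²([x₀,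 x_end]) from φ to the span of the first h random basis functions tends to 0 as h → ∞, with probability 1. -/
/-!
Almost surely the parameters `(α_j, γ_j)` are dense in the rectangle `[a₁, a₂] × [g₁, g₂]`, the
support of their law: a basic open set of probability `p > 0` is missed by the first `N` samples
with probability `(1 - p)ᴺ → 0`.

For such a dense parameter sequence, an `f ∈ L²[x₀, x_end]` orthogonal to every `G_j` is, by
continuity in the parameters, orthogonal to every Gaussian `exp (-(x + c)² t)` with `(c, t)` in
the rectangle. Completing the square at `t = g₁` says that `s ↦ ∫ f(x) e^{-g₁x²} e^{sx} dx`
vanishes on an open interval; differentiating in `s` then kills every moment, so by Weierstrass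
`f = 0` a.e. Thus the `G_j` span a dense subspace of `L²`, and the best `h`-term approximation
error decreases to `0`.
-/

open MeasureTheory Filter Set Real Topology ProbabilityTheory TopologicalSpace
open scoped ENNReal

section CompactInterval

variable {μ : Measure ℝ} {a b : ℝ} {g : ℝ → ℝ}

lemma ae_restrict_Icc_eq_zero_of_integral_mul_eval_eq_zero (hg : IntegrableOn g (Icc a b) μ)
    (hpoly : ∀ p : Polynomial ℝ, ∫ x in Icc a b, g x * p.eval x ∂μ = 0) :
    g =ᵐ[μ.restrict (Icc a b)] 0 := by
  have hcont : ∀ ψ : ℝ → ℝ, Continuous ψ → ∫ x in Icc a b, g x * ψ x ∂μ = 0 := by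
    intro ψ hψ
    refine abs_nonpos_iff.1 (le_of_forall_pos_le_add fun ε hε => ?_)
    set C := ∫ x in Icc a b, ‖g x‖ ∂μ
    have hC : 0 ≤ C := integral_nonneg fun _ => norm_nonneg _
    obtain ⟨p, hp⟩ := exists_polynomial_near_of_continuousOn a b ψ hψ.continuousOn
      (ε / (C + 1)) (by positivity)
    have hψp : ∫ x in Icc a b, g x * ψ x ∂μ =
        ∫ x in Icc a b, g x * (ψ x - p.eval x) ∂μ := by
      simp_rw [mul_sub]
      rw [integral_sub (hg.mul_continuousOn hψ.continuousOn isCompact_Icc)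
        (hg.mul_continuousOn p.continuous.continuousOn isCompact_Icc), hpoly, sub_zero]
    calc |∫ x in Icc a b, g x * ψ x ∂μ|
        ≤ ∫ x in Icc a b, ‖g x‖ * (ε / (C + 1)) ∂μ := by
          rw [hψp, ← Real.norm_eq_abs]
          refine norm_integral_le_of_norm_le (hg.norm.mul_const _) ?_
          filter_upwards [ae_restrict_mem measurableSet_Icc] with x hx
          rw [norm_mul, Real.norm_eq_abs (_ - _), abs_sub_comm]
          exact mul_le_mul_of_nonneg_left (hp x hx).le (norm_nonneg _)
      _ = C * (ε / (C + 1)) := integral_mul_const _ _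
      _ ≤ 0 + ε := by
          rw [zero_add, ← mul_div_assoc, div_le_iff₀ (by positivity)]
          nlinarith
  refine ae_eq_zero_of_integral_contDiff_smul_eq_zero hg.locallyIntegrable fun ψ hψ _ => ?_
  simp_rw [smul_eq_mul, mul_comm (ψ _)]
  exact hcont ψ hψ.continuous

lemma hasDerivAt_setIntegral_mul_pow_mul_exp (hg : IntegrableOn g (Icc a b) μ) (n : ℕ)
    (s₀ : ℝ) :
    HasDerivAt (fun s => ∫ x in Icc a b, g x * (x ^ n * exp (s * x)) ∂μ)
      (∫ x in Icc a b, g x * (x ^ (n + 1) * exp (s₀ * x)) ∂μ) s₀ := by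
  obtain ⟨C, hC⟩ := (isCompact_closedBall s₀ 1 |>.prod isCompact_Icc).exists_bound_of_continuousOn
      (f := fun q : ℝ × ℝ => q.2 ^ (n + 1) * exp (q.1 * q.2)) (by fun_prop)
  refine (hasDerivAt_integral_of_dominated_loc_of_deriv_le
    (F := fun s x => g x * (x ^ n * exp (s * x)))
    (F' := fun s x => g x * (x ^ (n + 1) * exp (s * x))) (bound := fun x => C * ‖g x‖)
    (Metric.closedBall_mem_nhds s₀ one_pos)
    (.of_forall fun s =>
      hg.aestronglyMeasurable.mul (by fun_prop : Continuous _).aestronglyMeasurable)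
    (hg.mul_continuousOn (by fun_prop) isCompact_Icc)
    (hg.aestronglyMeasurable.mul (by fun_prop : Continuous _).aestronglyMeasurable)
    ?_ (hg.norm.const_mul C) (.of_forall fun x s _ => ?_)).2
  · filter_upwards [ae_restrict_mem measurableSet_Icc] with x hx s hs
    rw [norm_mul, mul_comm]
    exact mul_le_mul_of_nonneg_right (hC (s, x) ⟨hs, hx⟩) (norm_nonneg _)
  · refine (((hasDerivAt_id s).mul_const x).exp.const_mul (x ^ n)).const_mul (g x)
      |>.congr_deriv ?_
    simp only [id]
    ring

lemma ae_restrict_Icc_eq_zero_of_integral_mul_exp_eq_zero (hg : IntegrableOn g (Icc a b) μ)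
    {U : Set ℝ} (hU : IsOpen U) (hUne : U.Nonempty)
    (h : ∀ s ∈ U, ∫ x in Icc a b, g x * exp (s * x) ∂μ = 0) :
    g =ᵐ[μ.restrict (Icc a b)] 0 := by
  have hmoment : ∀ n : ℕ, ∀ s ∈ U, ∫ x in Icc a b, g x * (x ^ n * exp (s * x)) ∂μ = 0 := by
    intro n
    induction n with
    | zero => simpa using h
    | succ n ih =>
      intro s hs
      have hlocal : (fun s => ∫ x in Icc a b, g x * (x ^ n * exp (s * x)) ∂μ) =ᶠ[𝓝 s]
          fun _ => 0 := eventually_of_mem (hU.mem_nhds hs) ih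
      exact (hasDerivAt_setIntegral_mul_pow_mul_exp hg n s).unique
        ((hasDerivAt_const s 0).congr_of_eventuallyEq hlocal)
  obtain ⟨s₀, hs₀⟩ := hUne
  have hg₀ : IntegrableOn (fun x => g x * exp (s₀ * x)) (Icc a b) μ :=
    hg.mul_continuousOn (by fun_prop) isCompact_Icc
  have hzero := ae_restrict_Icc_eq_zero_of_integral_mul_eval_eq_zero hg₀ fun p => by
    simp_rw [Polynomial.eval_eq_sum_range, Finset.mul_sum]
    rw [integral_finsetSum _ fun i _ =>
      hg₀.mul_continuousOn (by fun_prop) isCompact_Icc]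
    refine Finset.sum_eq_zero fun i _ => ?_
    calc ∫ x in Icc a b, g x * exp (s₀ * x) * (p.coeff i * x ^ i) ∂μ
        = p.coeff i * ∫ x in Icc a b, g x * (x ^ i * exp (s₀ * x)) ∂μ := by
          rw [← integral_const_mul]
          congr 1 with x
          ring
      _ = 0 := by rw [hmoment i s₀ hs₀, mul_zero]
  filter_upwards [hzero] with x hx
  simpa [exp_ne_zero] using hx

end CompactInterval

lemma continuous_setIntegral_mul {X Y : Type*} [TopologicalSpace X] [LocallyCompactSpace X]
    [FirstCountableTopology X] [TopologicalSpace Y] [T2Space Y] [MeasurableSpace Y]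
    [OpensMeasurableSpace Y] {μ : Measure Y} {K : Set Y} (hK : IsCompact K) {f : Y → ℝ}
    (hf : IntegrableOn f K μ) {k : X → Y → ℝ} (hk : Continuous (Function.uncurry k)) :
    Continuous fun p => ∫ y in K, f y * k p y ∂μ := by
  rw [continuous_iff_continuousAt]
  intro p₀
  obtain ⟨L, hL, hLp₀⟩ := exists_compact_mem_nhds p₀
  obtain ⟨C, hC⟩ := (hL.prod hK).exists_bound_of_continuousOn hk.continuousOn
  refine continuousAt_of_dominated (bound := fun y => ‖f y‖ * C)
    (.of_forall fun p => hf.aestronglyMeasurable.mul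
      (hk.comp (Continuous.prodMk_right p)).aestronglyMeasurable) ?_ (hf.norm.mul_const C)
    (.of_forall fun y =>
      continuousAt_const.mul (hk.comp (Continuous.prodMk_left y)).continuousAt)
  filter_upwards [hLp₀] with p hp
  filter_upwards [ae_restrict_mem hK.measurableSet] with y hy
  rw [norm_mul]
  exact mul_le_mul_of_nonneg_left (hC (p, y) ⟨hp, hy⟩) (norm_nonneg _)

lemma ae_restrict_Icc_eq_zero_of_integral_mul_gaussian_eq_zero {μ : Measure ℝ} {x₀ x₁ : ℝ}
    {f : ℝ → ℝ} (hf : IntegrableOn f (Icc x₀ x₁) μ) {a₁ a₂ t : ℝ} (ha : a₁ < a₂)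
    (ht : t ≠ 0)
    (h : ∀ c ∈ Ioo a₁ a₂, ∫ x in Icc x₀ x₁, f x * exp (-(x + c) ^ 2 * t) ∂μ = 0) :
    f =ᵐ[μ.restrict (Icc x₀ x₁)] 0 := by
  set g : ℝ → ℝ := fun x => f x * exp (-t * x ^ 2)
  have hg : IntegrableOn g (Icc x₀ x₁) μ := hf.mul_continuousOn (by fun_prop) isCompact_Icc
  -- completing the square: the Gaussian centred at `c` is `exp (-t x²) exp (s x)` up to a
  -- constant factor, where `s = -2tc`
  have hcenter : ∀ s x, g x * exp (s * x) =
      exp (t * (-s / (2 * t)) ^ 2) * (f x * exp (-(x + -s / (2 * t)) ^ 2 * t)) := by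
    intro s x
    have hexp : -t * x ^ 2 + s * x = t * (-s / (2 * t)) ^ 2 + -(x + -s / (2 * t)) ^ 2 * t := by
      field_simp
      ring
    simp only [g]
    rw [mul_assoc, ← exp_add, hexp, exp_add]
    ring
  have hzero := ae_restrict_Icc_eq_zero_of_integral_mul_exp_eq_zero hg
    (U := (fun s => -s / (2 * t)) ⁻¹' Ioo a₁ a₂) (isOpen_Ioo.preimage (by fun_prop))
    ⟨-(2 * t) * ((a₁ + a₂) / 2), by
      simp only [mem_preimage, neg_mul, neg_neg,
        mul_div_cancel_left₀ _ (mul_ne_zero two_ne_zero ht)]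
      constructor <;> linarith⟩
    fun s hs => by simp_rw [hcenter, integral_const_mul, h _ hs, mul_zero]
  filter_upwards [hzero] with x hx
  simpa [g, exp_ne_zero] using hx

lemma ContinuousOn.memLp_restrict {X : Type*} [TopologicalSpace X] [T2Space X]
    [MeasurableSpace X] [OpensMeasurableSpace X] {μ : Measure X} [IsFiniteMeasureOnCompacts μ]
    {K : Set X} {f : X → ℝ} (hf : ContinuousOn f K) (hK : IsCompact K) (p : ℝ≥0∞) :
    MemLp f p (μ.restrict K) := by
  have : IsFiniteMeasure (μ.restrict K) := isFiniteMeasure_restrict.2 hK.measure_lt_top.ne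
  obtain ⟨C, hC⟩ := hK.exists_bound_of_continuousOn hf
  exact MemLp.of_bound (hf.aestronglyMeasurable hK.measurableSet) C
    ((ae_restrict_mem hK.measurableSet).mono hC)

section L2Approximation

variable {α : Type*} [MeasurableSpace α] {μ : Measure α}

lemma MeasureTheory.MemLp.coeFn_sum_smul_toLp {p : ENNReal} [Fact (1 ≤ p)] {ι : Type*}
    {u : ι → α → ℝ} (hu : ∀ j, MemLp (u j) p μ) (w : ι → ℝ) (s : Finset ι) :
    ⇑(∑ j ∈ s, w j • (hu j).toLp (u j)) =ᵐ[μ] fun x => ∑ j ∈ s, w j * u j x := by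
  classical
  induction s using Finset.induction_on with
  | empty =>
    simp only [Finset.sum_empty]
    exact Lp.coeFn_zero ℝ p μ
  | insert j s hj ih =>
    simp_rw [Finset.sum_insert hj]
    filter_upwards [Lp.coeFn_add (w j • (hu j).toLp (u j)) (∑ i ∈ s, w i • (hu i).toLp (u i)),
      Lp.coeFn_smul (w j) ((hu j).toLp (u j)), (hu j).coeFn_toLp, ih] with x hadd hsmul hj hs
    rw [hadd, Pi.add_apply, hsmul, Pi.smul_apply, hj, hs, smul_eq_mul]

lemma MeasureTheory.Lp.integral_sq_eq_norm_sq {V : Lp ℝ 2 μ} {F : α → ℝ}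
    (hVF : V =ᵐ[μ] F) : ∫ x, F x ^ 2 ∂μ = ‖V‖ ^ 2 := by
  rw [← real_inner_self_eq_norm_sq, L2.inner_def]
  refine integral_congr_ae ?_
  filter_upwards [hVF] with x hx
  simp [hx, sq]

def IsTotalInL2 (μ : Measure α) (u : ℕ → α → ℝ) : Prop :=
  ∀ f : α → ℝ, MemLp f 2 μ → (∀ j, ∫ x, f x * u j x ∂μ = 0) → f =ᵐ[μ] 0

variable {u : ℕ → α → ℝ}

lemma topologicalClosure_span_range_toLp_eq_top (hu : ∀ j, MemLp (u j) 2 μ)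
    (htotal : IsTotalInL2 μ u) :
    (Submodule.span ℝ (range fun j => (hu j).toLp (u j))).topologicalClosure = ⊤ := by
  rw [Submodule.topologicalClosure_eq_top_iff, Submodule.eq_bot_iff]
  intro v hv
  refine Lp.eq_zero_iff_ae_eq_zero.2 (htotal v (Lp.memLp v) fun j => ?_)
  have hinner := (Submodule.mem_orthogonal _ v).1 hv _ (Submodule.subset_span ⟨j, rfl⟩)
  rw [L2.inner_def] at hinner
  rw [← hinner]
  refine integral_congr_ae ?_
  filter_upwards [(hu j).coeFn_toLp] with x hx
  simp [hx, mul_comm]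

lemma eventually_exists_integral_sq_sum_sub_lt (hu : ∀ j, MemLp (u j) 2 μ)
    (htotal : IsTotalInL2 μ u) {φ : α → ℝ} (hφ : MemLp φ 2 μ) {ε : ℝ} (hε : 0 < ε) :
    ∀ᶠ h in atTop, ∃ w : Fin h → ℝ, ∫ x, (∑ j, w j * u j x - φ x) ^ 2 ∂μ < ε := by
  set S := Submodule.span ℝ (range fun j => (hu j).toLp (u j))
  have hφS : hφ.toLp φ ∈ closure (S : Set (Lp ℝ 2 μ)) := by
    rw [← Submodule.topologicalClosure_coe,
      topologicalClosure_span_range_toLp_eq_top hu htotal]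
    trivial
  obtain ⟨v, hvS, hv⟩ := Metric.mem_closure_iff.1 hφS (√ε) (Real.sqrt_pos.2 hε)
  obtain ⟨c, rfl⟩ := Finsupp.mem_span_range_iff_exists_finsupp.1 hvS
  filter_upwards [eventually_gt_atTop (c.support.sup id)] with h hh
  refine ⟨fun j => c j, ?_⟩
  have hsupp : c.support ⊆ Finset.range h := fun j hj =>
    Finset.mem_range.2 ((Finset.le_sup (f := id) hj).trans_lt hh)
  have hsum : (c.sum fun j a => a • (hu j).toLp (u j)) =
      ∑ j : Fin h, c j • (hu j).toLp (u j) := by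
    rw [Finsupp.sum_of_support_subset c hsupp (fun j a => a • (hu j).toLp (u j))
      fun j _ => zero_smul ℝ _, Finset.sum_range]
  rw [hsum, dist_comm, dist_eq_norm] at hv
  rw [Lp.integral_sq_eq_norm_sq (F := fun x => ∑ j : Fin h, c j * u j x - φ x),
    ← Real.sqrt_lt_sqrt_iff (sq_nonneg _), Real.sqrt_sq (norm_nonneg _)]
  · exact hv
  · filter_upwards [Lp.coeFn_sub (∑ j : Fin h, c j • (hu j).toLp (u j)) (hφ.toLp φ),
      MemLp.coeFn_sum_smul_toLp (fun j : Fin h => hu j) (fun j => c j) Finset.univ,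
      hφ.coeFn_toLp] with x hsub hsum hφx
    rw [hsub, Pi.sub_apply, hsum, hφx]

lemma tendsto_iInf_integral_sq_sum_sub_zero (hu : ∀ j, MemLp (u j) 2 μ)
    (htotal : IsTotalInL2 μ u) {φ : α → ℝ} (hφ : MemLp φ 2 μ) :
    Tendsto (fun h : ℕ => ⨅ w : Fin h → ℝ, ∫ x, (∑ j, w j * u j x - φ x) ^ 2 ∂μ)
      atTop (𝓝 0) := by
  have hnonneg : ∀ h (w : Fin h → ℝ), 0 ≤ ∫ x, (∑ j, w j * u j x - φ x) ^ 2 ∂μ :=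
    fun _ _ => integral_nonneg fun _ => sq_nonneg _
  refine tendsto_order.2 ⟨fun ε hε => .of_forall fun h => hε.trans_le (le_ciInf (hnonneg h)),
    fun ε hε => ?_⟩
  filter_upwards [eventually_exists_integral_sq_sum_sub_lt hu htotal hφ hε] with h ⟨w, hw⟩
  exact (ciInf_le ⟨0, forall_mem_range.2 (hnonneg h)⟩ w).trans_lt hw

end L2Approximation

namespace MeasureTheory.Measure

variable {X : Type*} [TopologicalSpace X] [MeasurableSpace X]

lemma support_smul {k : ℝ≥0∞} (hk : k ≠ 0) (μ : Measure X) :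
    (k • μ).support = μ.support := by
  ext x
  simp only [mem_support_iff_forall, smul_apply, smul_eq_mul, ENNReal.mul_pos_iff,
    pos_iff_ne_zero.2 hk, true_and]

variable {Y : Type*} [TopologicalSpace Y] [MeasurableSpace Y]

lemma prod_support_subset_support_prod (μ : Measure X) (ν : Measure Y) [SFinite ν] :
    μ.support ×ˢ ν.support ⊆ (μ.prod ν).support := by
  rintro ⟨x, y⟩ ⟨hx, hy⟩
  rw [mem_support_iff_forall] at hx hy ⊢
  intro U hU
  obtain ⟨u, hu, v, hv, huv⟩ := mem_nhds_prod_iff.1 hU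
  calc 0 < μ u * ν v := ENNReal.mul_pos (hx u hu).ne' (hy v hv).ne'
    _ = μ.prod ν (u ×ˢ v) := (prod_prod u v).symm
    _ ≤ μ.prod ν U := measure_mono huv

end MeasureTheory.Measure

lemma Icc_subset_support_smul_volume_restrict {a b : ℝ} (hab : a < b) {k : ℝ≥0∞}
    (hk : k ≠ 0) : Icc a b ⊆ (k • volume.restrict (Icc a b)).support := by
  rw [Measure.support_smul hk]
  calc Icc a b = closure (interior (Icc a b)) := by rw [interior_Icc, closure_Ioo hab.ne]
    _ ⊆ _ := Measure.isClosed_support.closure_subset_iff.2 fun x hx =>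
      Measure.interior_inter_support ⟨hx, by simp [Measure.support_eq_univ]⟩

section IID

variable {Ω E : Type*} [MeasurableSpace Ω] [MeasurableSpace E] {P : Measure Ω}
  [IsProbabilityMeasure P] {X : ℕ → Ω → E} {ν : Measure E}

lemma ae_exists_mem_of_iIndepFun (hX : ∀ j, Measurable (X j)) (hind : iIndepFun X P)
    (hlaw : ∀ j, P.map (X j) = ν) {U : Set E} (hU : MeasurableSet U) (hνU : ν U ≠ 0) :
    ∀ᵐ ω ∂P, ∃ j, X j ω ∈ U := by
  have : IsProbabilityMeasure ν :=
    hlaw 0 ▸ Measure.isProbabilityMeasure_map (hX 0).aemeasurable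
  have hmiss : ∀ j, P (X j ⁻¹' Uᶜ) = ν Uᶜ := fun j => by
    rw [← Measure.map_apply (hX j) hU.compl, hlaw j]
  have hlt : ν Uᶜ < 1 := by
    rw [prob_compl_eq_one_sub hU]
    exact ENNReal.sub_lt_self ENNReal.one_ne_top one_ne_zero hνU
  have hbound : ∀ N, P (⋂ j, X j ⁻¹' Uᶜ) ≤ ν Uᶜ ^ N := fun N =>
    calc P (⋂ j, X j ⁻¹' Uᶜ) ≤ P (⋂ j ∈ Finset.range N, X j ⁻¹' Uᶜ) :=
          measure_mono fun ω hω => mem_iInter₂.2 fun j _ => mem_iInter.1 hω j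
      _ = ∏ j ∈ Finset.range N, P (X j ⁻¹' Uᶜ) :=
          hind.meas_biInter fun j _ => ⟨Uᶜ, hU.compl, rfl⟩
      _ = ν Uᶜ ^ N := by simp only [hmiss, Finset.prod_const, Finset.card_range]
  have hnull : P (⋂ j, X j ⁻¹' Uᶜ) = 0 :=
    le_antisymm (ge_of_tendsto' (ENNReal.tendsto_pow_atTop_nhds_zero_of_lt_one hlt) hbound)
      bot_le
  rw [ae_iff]
  convert hnull
  ext ω
  simp

lemma ae_support_subset_closure_range [TopologicalSpace E] [SecondCountableTopology E]
    [OpensMeasurableSpace E] (hX : ∀ j, Measurable (X j)) (hind : iIndepFun X P)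
    (hlaw : ∀ j, P.map (X j) = ν) :
    ∀ᵐ ω ∂P, ν.support ⊆ closure (range fun j => X j ω) := by
  have hhit : ∀ᵐ ω ∂P, ∀ b ∈ countableBasis E, ν b ≠ 0 → ∃ j, X j ω ∈ b := by
    refine (ae_ball_iff (countable_countableBasis E)).2 fun b hb => ?_
    by_cases hνb : ν b = 0
    · exact .of_forall fun _ h => absurd hνb h
    · exact (ae_exists_mem_of_iIndepFun hX hind hlaw
        (isOpen_of_mem_countableBasis hb).measurableSet hνb).mono fun _ h _ => h
  filter_upwards [hhit] with ω hω x hx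
  rw [(isBasis_countableBasis E).mem_closure_iff]
  intro b hb hxb
  have hνb := (Measure.mem_support_iff_forall x).1 hx b
    ((isOpen_of_mem_countableBasis hb).mem_nhds hxb)
  obtain ⟨j, hj⟩ := hω b hb hνb.ne'
  exact ⟨X j ω, hj, j, rfl⟩

end IID

/-- **Universal approximation of the random-projection Gaussian RBF network.** Let
`((α_j, γ_j))_{j∈ℕ}` be an i.i.d. sequence of random pairs with `α_j` uniform on `[a₁,a₂]`,
`γ_j` uniform on `[g₁,g₂] ⊂ (0,∞)` and `α_j` independent of `γ_j`; set `β_j = 1/γ_j` and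
`G_j(x) = exp(−(x+α_j)²/β_j)`. Then almost surely, for every continuous `φ` on `[x₀,x_end]`,
the `L²` distance from `φ` to the span of `G_1,…,G_h` tends to `0` as `h → ∞`. -/
theorem rpnn_gaussian_rbf_universal_approximation
    (x₀ xend : ℝ) (hx : x₀ < xend)
    (a₁ a₂ : ℝ) (ha : a₁ < a₂)
    (g₁ g₂ : ℝ) (hg₁ : 0 < g₁) (hg : g₁ < g₂)
    {Ω : Type*} [MeasurableSpace Ω] (P : Measure Ω) [IsProbabilityMeasure P]
    (α γ : ℕ → Ω → ℝ)
    (hmeas : ∀ j : ℕ, Measurable fun ω => (α j ω, γ j ω))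
    (hindep : ProbabilityTheory.iIndepFun
      (fun j ω => (α j ω, γ j ω)) P)
    (hdist : ∀ j : ℕ, P.map (fun ω => (α j ω, γ j ω)) =
      ((ENNReal.ofReal (a₂ - a₁))⁻¹ • (volume : Measure ℝ).restrict (Set.Icc a₁ a₂)).prod
        ((ENNReal.ofReal (g₂ - g₁))⁻¹ • (volume : Measure ℝ).restrict (Set.Icc g₁ g₂))) :
    ∀ᵐ ω ∂P, ∀ φ : ℝ → ℝ, ContinuousOn φ (Set.Icc x₀ xend) →
      Tendsto
        (fun h : ℕ => ⨅ w : Fin h → ℝ,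
          ∫ x in x₀..xend,
            (∑ j, w j * Real.exp (-(x + α j ω) ^ 2 / (γ j ω)⁻¹) - φ x) ^ 2)
        atTop (nhds 0) := by
  set ν := ((ENNReal.ofReal (a₂ - a₁))⁻¹ • (volume : Measure ℝ).restrict (Icc a₁ a₂)).prod
    ((ENNReal.ofReal (g₂ - g₁))⁻¹ • (volume : Measure ℝ).restrict (Icc g₁ g₂))
  have hk : ∀ r : ℝ, (ENNReal.ofReal r)⁻¹ ≠ 0 := fun _ =>
    ENNReal.inv_ne_zero.2 ENNReal.ofReal_ne_top
  have hsupp : Icc a₁ a₂ ×ˢ Icc g₁ g₂ ⊆ ν.support :=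
    (prod_mono (Icc_subset_support_smul_volume_restrict ha (hk _))
      (Icc_subset_support_smul_volume_restrict hg (hk _))).trans
      (Measure.prod_support_subset_support_prod _ _)
  filter_upwards [ae_support_subset_closure_range hmeas hindep hdist] with ω hω φ hφ
  have htotal : IsTotalInL2 (volume.restrict (Icc x₀ xend))
      fun j x => exp (-(x + α j ω) ^ 2 * γ j ω) := by
    intro f hf horth
    have hfi : IntegrableOn f (Icc x₀ xend) := hf.integrable one_le_two
    refine ae_restrict_Icc_eq_zero_of_integral_mul_gaussian_eq_zero hfi ha hg₁.ne' fun c hc => ?_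
    have hcont := continuous_setIntegral_mul isCompact_Icc hfi
      (k := fun (q : ℝ × ℝ) x => exp (-(x + q.1) ^ 2 * q.2)) (by fun_prop)
    exact (isClosed_eq hcont continuous_const).closure_subset_iff.2 (range_subset_iff.2 horth)
      (hω (hsupp (mk_mem_prod (Ioo_subset_Icc_self hc) (left_mem_Icc.2 hg.le))))
  simp_rw [intervalIntegral.integral_of_le hx.le, ← integral_Icc_eq_integral_Ioc,
    div_inv_eq_mul]
  exact tendsto_iInf_integral_sq_sum_sub_zero
    (fun j => (by fun_prop : Continuous _).continuousOn.memLp_restrict isCompact_Icc 2)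
    htotal (hφ.memLp_restrict isCompact_Icc 2)
end

section
/- (Explicit general solution of the homogeneous constant-coefficient linear system.) Let m be a positive natural number, A an m×m complex matrix, λ₁, …, λ_m ∈ ℂ and c₁, …, c_m ∈ ℂ^m with A·c_l = λ_l·c_l for each l, and assume c₁, …, c_m form a basis of ℂ^m. Then for any coefficients κ₁, …, κ_m ∈ ℂ, the function y(x) = Σ_{l=1}^{m} κ_l·exp(λ_l·x)·c_l is differentiable and satisfies y'(x) = A·y(x) for all x ∈ ℝ with y(0) = Σ_{l=1}^{m} κ_l·c_l; moreover, it is the unique differentiable function on ℝ satisfying this initial value problem, so every solution of y' = A·y is of this form. -/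
/-!
Each eigenpair `(λ, c)` gives the solution `t ↦ exp(λ t) • c` of `y' = A y`, so by linearity so
does every combination of them. The right-hand side `y ↦ A y` is globally Lipschitz, hence a
solution is determined by its value at `0` (Picard–Lindelöf uniqueness); since the `c_l` span,
every initial value is matched by some combination.
-/

open Complex Matrix

variable {ι n : Type*} [Fintype ι]

theorem Matrix.eq_of_hasDerivAt_mulVec {𝕜 : Type*} [RCLike 𝕜] [Fintype n] (A : Matrix n n 𝕜)
    {f g : ℝ → n → 𝕜} (hf : ∀ t, HasDerivAt f (A *ᵥ f t) t)
    (hg : ∀ t, HasDerivAt g (A *ᵥ g t) t) {t₀ : ℝ} (h : f t₀ = g t₀) : f = g :=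
  ODE_solution_unique_univ (v := fun _ => (A *ᵥ ·)) (s := fun _ => Set.univ)
    (fun _ => (mulVecLin A).toContinuousLinearMap.lipschitz.lipschitzOnWith)
    (fun t => ⟨hf t, trivial⟩) (fun t => ⟨hg t, trivial⟩) h

theorem Matrix.hasDerivAt_cexp_mul_smul_of_mulVec_eq [Fintype n] {A : Matrix n n ℂ} {μ : ℂ}
    {v : n → ℂ} (hv : A *ᵥ v = μ • v) (x : ℝ) :
    HasDerivAt (fun t : ℝ => cexp (μ * t) • v) (A *ᵥ (cexp (μ * x) • v)) x := by
  have hexp : HasDerivAt (fun t : ℝ => cexp (μ * t)) (cexp (μ * x) * μ) x :=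
    ((hasDerivAt_id (x : ℂ)).const_mul μ).cexp.comp_ofReal.congr_deriv (by simp)
  rw [mulVec_smul, hv, smul_smul]
  exact hexp.smul_const v

noncomputable def eigenExpansion (lam : ι → ℂ) (c : ι → n → ℂ) (κ : ι → ℂ) (t : ℝ) : n → ℂ :=
  ∑ l, κ l • cexp (lam l * t) • c l

theorem eigenExpansion_zero (lam : ι → ℂ) (c : ι → n → ℂ) (κ : ι → ℂ) :
    eigenExpansion lam c κ 0 = ∑ l, κ l • c l := by
  simp [eigenExpansion]

section eigenExpansion

variable [Fintype n] {A : Matrix n n ℂ} {lam : ι → ℂ} {c : ι → n → ℂ}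

theorem hasDerivAt_eigenExpansion (heig : ∀ l, A *ᵥ c l = lam l • c l) (κ : ι → ℂ) (x : ℝ) :
    HasDerivAt (eigenExpansion lam c κ) (A *ᵥ eigenExpansion lam c κ x) x := by
  have hterm l : HasDerivAt (fun t : ℝ => κ l • cexp (lam l * t) • c l)
      (A *ᵥ (κ l • cexp (lam l * x) • c l)) x := by
    rw [mulVec_smul]
    exact (hasDerivAt_cexp_mul_smul_of_mulVec_eq (heig l) x).const_smul (κ l)
  unfold eigenExpansion
  rw [mulVec_sum]
  exact HasDerivAt.fun_sum fun l _ => hterm l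

theorem eq_eigenExpansion_of_hasDerivAt (heig : ∀ l, A *ᵥ c l = lam l • c l) {κ : ι → ℂ}
    {z : ℝ → n → ℂ} (hz : ∀ t, HasDerivAt z (A *ᵥ z t) t) (hz0 : z 0 = ∑ l, κ l • c l) :
    z = eigenExpansion lam c κ :=
  A.eq_of_hasDerivAt_mulVec hz (hasDerivAt_eigenExpansion heig κ)
    (hz0.trans (eigenExpansion_zero lam c κ).symm)

theorem exists_eq_eigenExpansion_of_hasDerivAt (heig : ∀ l, A *ᵥ c l = lam l • c l)
    (hspan : Submodule.span ℂ (Set.range c) = ⊤) {z : ℝ → n → ℂ}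
    (hz : ∀ t, HasDerivAt z (A *ᵥ z t) t) : ∃ κ, z = eigenExpansion lam c κ := by
  obtain ⟨κ, hκ⟩ := (Submodule.mem_span_range_iff_exists_fun ℂ).mp (hspan ▸ Submodule.mem_top)
  exact ⟨κ, eq_eigenExpansion_of_hasDerivAt heig hz hκ.symm⟩

end eigenExpansion

theorem linear_system_general_solution_general
    (m : ℕ) (A : Matrix (Fin m) (Fin m) ℂ)
    (lam : Fin m → ℂ) (c : Fin m → Fin m → ℂ)
    (heig : ∀ l : Fin m, A.mulVec (c l) = lam l • c l)
    (hspan : Submodule.span ℂ (Set.range c) = ⊤) (κ : Fin m → ℂ) :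
    (∀ x : ℝ,
      HasDerivAt (fun t : ℝ => ∑ l, κ l • Complex.exp (lam l * (t : ℂ)) • c l)
        (A.mulVec (∑ l, κ l • Complex.exp (lam l * (x : ℂ)) • c l)) x) ∧
    (∑ l, κ l • Complex.exp (lam l * ((0 : ℝ) : ℂ)) • c l) = (∑ l, κ l • c l) ∧
    (∀ z : ℝ → Fin m → ℂ,
      (∀ x : ℝ, HasDerivAt z (A.mulVec (z x)) x) →
      z 0 = (∑ l, κ l • c l) →
      ∀ x : ℝ, z x = ∑ l, κ l • Complex.exp (lam l * (x : ℂ)) • c l) ∧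
    (∀ z : ℝ → Fin m → ℂ,
      (∀ x : ℝ, HasDerivAt z (A.mulVec (z x)) x) →
      ∃ κ' : Fin m → ℂ,
        ∀ x : ℝ, z x = ∑ l, κ' l • Complex.exp (lam l * (x : ℂ)) • c l) := by
  refine ⟨hasDerivAt_eigenExpansion heig κ, eigenExpansion_zero lam c κ,
    fun z hz hz0 => congrFun (eq_eigenExpansion_of_hasDerivAt heig hz hz0), fun z hz => ?_⟩
  obtain ⟨κ', rfl⟩ := exists_eq_eigenExpansion_of_hasDerivAt heig hspan hz
  exact ⟨κ', fun _ => rfl⟩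

/-- **Explicit general solution of the homogeneous constant-coefficient linear system.** Let
`A ∈ ℂ^{m×m}`, let `(λ_l, c_l)` be eigenvalue–eigenvector pairs with `c₁,…,c_m` a basis of
`ℂ^m`. Then for any coefficients `κ`, `y(x) = Σ_l κ_l exp(λ_l x) c_l` is differentiable,
satisfies `y' = A y` with `y(0) = Σ_l κ_l c_l`, is the unique solution with that initial value,
and every solution of `y' = A y` is of this form. -/
theorem linear_system_general_solution
    (m : ℕ) (hm : 0 < m) (A : Matrix (Fin m) (Fin m) ℂ)
    (lam : Fin m → ℂ) (c : Fin m → Fin m → ℂ)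
    (heig : ∀ l : Fin m, A.mulVec (c l) = lam l • c l)
    (hindep : LinearIndependent ℂ c)
    (hspan : Submodule.span ℂ (Set.range c) = ⊤) (κ : Fin m → ℂ) :
    (∀ x : ℝ,
      HasDerivAt (fun t : ℝ => ∑ l, κ l • Complex.exp (lam l * (t : ℂ)) • c l)
        (A.mulVec (∑ l, κ l • Complex.exp (lam l * (x : ℂ)) • c l)) x) ∧
    (∑ l, κ l • Complex.exp (lam l * ((0 : ℝ) : ℂ)) • c l) = (∑ l, κ l • c l) ∧
    (∀ z : ℝ → Fin m → ℂ,
      (∀ x : ℝ, HasDerivAt z (A.mulVec (z x)) x) →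
      z 0 = (∑ l, κ l • c l) →
      ∀ x : ℝ, z x = ∑ l, κ l • Complex.exp (lam l * (x : ℂ)) • c l) ∧
    (∀ z : ℝ → Fin m → ℂ,
      (∀ x : ℝ, HasDerivAt z (A.mulVec (z x)) x) →
      ∃ κ' : Fin m → ℂ,
        ∀ x : ℝ, z x = ∑ l, κ' l • Complex.exp (lam l * (x : ℂ)) • c l) :=
  linear_system_general_solution_general m A lam c heig hspan κ
end
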